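/- For 0 < μ < 1 let S_μ = {(x, y) ∈ ℝ² : x ≥ 1, y ≥ 1, x³ y ≤ μ^{−4}, x y³ ≤ μ^{−4}}. Then lim_{μ→0⁺} μ² · area(S_μ) = 2, where area denotes two-dimensional Lebesgue measure. -/

import Mathlib

/-!
Put `t = μ^(-1/3)`, so that the constraints read `x³y ≤ t¹²` and `xy³ ≤ t¹²`. At fixed `x ≥ 1`
the slice is `1 ≤ y ≤ min (t¹²/x³) (t⁴x^(-1/3))`; the cube-root bound is the active one for
`x ≤ t³` and the other for `t³ ≤ x ≤ t⁴`, beyond which the slice is empty. Hence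
`area(S_μ) = ∫₁^{t⁴} (min … - 1) = 2t⁶ - 3t⁴ + 1`, and with `s = μ^(1/3) = t⁻¹`,
`μ² · area(S_μ) = 2 - 3s² + s⁶ → 2`.
-/

open MeasureTheory Filter Real

/-- The region of `(N, k₁)` for M-theory vacua `AdS₄ × S⁷/ℤ_{k₁}` (the `Q = 12`
case) allowed by the cutoff `μ`. -/
def ads4Q12Region (μ : ℝ) : Set (ℝ × ℝ) :=
  {x | 1 ≤ x.1 ∧ 1 ≤ x.2 ∧
    x.1 ^ 3 * x.2 ≤ μ ^ (-(4 : ℝ)) ∧ x.1 * x.2 ^ 3 ≤ μ ^ (-(4 : ℝ))}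

open Set

theorem volume_region_between_cc_eq_lintegral {α : Type*} [MeasurableSpace α] (μ : Measure α)
    [SFinite μ] {f g : α → ℝ} {s : Set α} (hf : Measurable f) (hg : Measurable g)
    (hs : MeasurableSet s) :
    μ.prod volume {p : α × ℝ | p.1 ∈ s ∧ p.2 ∈ Icc (f p.1) (g p.1)} =
      ∫⁻ x in s, ENNReal.ofReal (g x - f x) ∂μ := by
  rw [Measure.prod_apply (measurableSet_region_between_cc hf hg hs),
    ← lintegral_indicator hs]
  congr 1 with x
  by_cases hx : x ∈ s <;> simp [hx, preimage, -Set.mem_Icc]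

namespace Ads4Q12

/- Since `(x³y)³ = x⁸ · (xy³)`, on `x ≤ t³` the constraint `xy³ ≤ t¹²` implies `x³y ≤ t¹²`,
and on `x ≥ t³` the converse implication holds. -/
lemma pow_three_mul_le_of_mul_pow_three_le {t x y : ℝ} (hx : 0 ≤ x) (hy : 0 ≤ y)
    (hxt : x ≤ t ^ 3) (h : x * y ^ 3 ≤ t ^ 12) : x ^ 3 * y ≤ t ^ 12 := by
  refine le_of_pow_le_pow_left₀ three_ne_zero (by positivity) ?_
  calc (x ^ 3 * y) ^ 3 = x ^ 8 * (x * y ^ 3) := by ring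
    _ ≤ (t ^ 3) ^ 8 * t ^ 12 := by gcongr
    _ = (t ^ 12) ^ 3 := by ring

lemma mul_pow_three_le_of_pow_three_mul_le {t x y : ℝ} (ht : 0 ≤ t) (hy : 0 ≤ y)
    (hx : 0 < x) (hxt : t ^ 3 ≤ x) (h : x ^ 3 * y ≤ t ^ 12) : x * y ^ 3 ≤ t ^ 12 := by
  refine le_of_mul_le_mul_left ?_ (pow_pos hx 8)
  calc x ^ 8 * (x * y ^ 3) = (x ^ 3 * y) ^ 3 := by ring
    _ ≤ (t ^ 12) ^ 3 := by gcongr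
    _ = (t ^ 3) ^ 8 * t ^ 12 := by ring
    _ ≤ x ^ 8 * t ^ 12 := by gcongr

/-- For `x ≥ 1`, the vertical slice of the region at `x` is `[1, sliceTop t x]`, where
`t = μ^(-1/3)`; the second argument of `min` is `(t¹² / x)^(1/3)`. -/
noncomputable def sliceTop (t x : ℝ) : ℝ := min (t ^ 12 / x ^ 3) (t ^ 4 * x ^ (-(1 / 3 : ℝ)))

lemma mul_cbrt_pow_three {t x : ℝ} (hx : 0 < x) :
    x * (t ^ 4 * x ^ (-(1 / 3 : ℝ))) ^ 3 = t ^ 12 := by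
  rw [mul_pow, ← rpow_natCast (x ^ _), ← rpow_mul hx.le]
  norm_num [rpow_neg_one]
  field_simp

lemma le_sliceTop_iff {t x y : ℝ} (hx : 0 < x) (hy : 0 ≤ y) :
    y ≤ sliceTop t x ↔ x ^ 3 * y ≤ t ^ 12 ∧ x * y ^ 3 ≤ t ^ 12 := by
  have hc : 0 ≤ t ^ 4 * x ^ (-(1 / 3 : ℝ)) := by positivity
  rw [sliceTop, le_min_iff]
  refine and_congr ?_ ?_
  · rw [le_div_iff₀ (by positivity), mul_comm]
  · rw [← pow_le_pow_iff_left₀ hy hc three_ne_zero, ← mul_cbrt_pow_three (t := t) hx,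
      mul_le_mul_iff_right₀ hx]

lemma sliceTop_of_le {t x : ℝ} (hx : 0 < x) (hxt : x ≤ t ^ 3) :
    sliceTop t x = t ^ 4 * x ^ (-(1 / 3 : ℝ)) := by
  refine min_eq_right ((le_div_iff₀ (by positivity)).2 ?_)
  rw [mul_comm]
  exact pow_three_mul_le_of_mul_pow_three_le hx.le (by positivity) hxt (mul_cbrt_pow_three hx).le

lemma sliceTop_of_ge {t x : ℝ} (ht : 0 ≤ t) (hx : 0 < x) (hxt : t ^ 3 ≤ x) :
    sliceTop t x = t ^ 12 / x ^ 3 := by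
  have hd : x ^ 3 * (t ^ 12 / x ^ 3) = t ^ 12 := by field_simp
  refine min_eq_left ?_
  have := (le_sliceTop_iff hx (by positivity)).2
    ⟨hd.le, mul_pow_three_le_of_pow_three_mul_le ht (by positivity) hx hxt hd.le⟩
  exact this.trans (min_le_right _ _)

lemma continuousOn_sliceTop (t : ℝ) : ContinuousOn (sliceTop t) (Ioi 0) := by
  refine ContinuousOn.inf ?_ ?_
  · exact continuousOn_const.div (continuousOn_pow 3) fun x hx => pow_ne_zero 3 (ne_of_gt hx)
  · exact continuousOn_const.mul (continuousOn_id.rpow_const fun x hx => Or.inl (ne_of_gt hx))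

lemma measurable_sliceTop (t : ℝ) : Measurable (sliceTop t) := by
  unfold sliceTop; fun_prop

lemma region_eq {μ t : ℝ} (hμ : μ ^ (-(4 : ℝ)) = t ^ 12) :
    ads4Q12Region μ = {p | p.1 ∈ Icc 1 (t ^ 4) ∧ p.2 ∈ Icc 1 (sliceTop t p.1)} := by
  ext ⟨x, y⟩
  simp only [ads4Q12Region, mem_ofPred_eq, mem_Icc, hμ]
  constructor
  · rintro ⟨hx, hy, hcube, hlin⟩
    refine ⟨⟨hx, ?_⟩, hy, (le_sliceTop_iff (by positivity) (by positivity)).2 ⟨hcube, hlin⟩⟩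
    refine le_of_pow_le_pow_left₀ three_ne_zero (by positivity) ?_
    calc x ^ 3 ≤ x ^ 3 * y := le_mul_of_one_le_right (by positivity) hy
      _ ≤ (t ^ 4) ^ 3 := by rw [← pow_mul]; exact hcube
  · rintro ⟨⟨hx, -⟩, hy, hyt⟩
    exact ⟨hx, hy, (le_sliceTop_iff (by positivity) (by positivity)).1 hyt⟩

lemma intervalIntegrable_sliceTop (t : ℝ) {a b : ℝ} (ha : 0 < a) (hab : a ≤ b) :
    IntervalIntegrable (sliceTop t) volume a b :=
  ((continuousOn_sliceTop t).mono fun _ hx => ha.trans_le hx.1).intervalIntegrable_of_Icc hab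

lemma integral_sliceTop_of_le_cube {t : ℝ} (ht : 1 ≤ t) :
    ∫ x in (1 : ℝ)..t ^ 3, sliceTop t x = 3 / 2 * (t ^ 6 - t ^ 4) := by
  have h1 : 1 ≤ t ^ 3 := one_le_pow₀ ht
  rw [intervalIntegral.integral_congr (g := fun x => t ^ 4 * x ^ (-(1 / 3 : ℝ))) fun x hx =>
      sliceTop_of_le (one_pos.trans_le (uIcc_of_le h1 ▸ hx).1) (uIcc_of_le h1 ▸ hx).2,
    intervalIntegral.integral_const_mul, integral_rpow (Or.inl (by norm_num)), one_rpow,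
    ← rpow_natCast t 3, ← rpow_mul (by positivity)]
  norm_num
  ring

lemma integral_sliceTop_of_cube_le {t : ℝ} (ht : 1 ≤ t) :
    ∫ x in t ^ 3..t ^ 4, sliceTop t x = (t ^ 6 - t ^ 4) / 2 := by
  have h1 : 1 ≤ t ^ 3 := one_le_pow₀ ht
  have h34 : t ^ 3 ≤ t ^ 4 := pow_le_pow_right₀ ht (by norm_num)
  have hzero : (0 : ℝ) ∉ uIcc (t ^ 3) (t ^ 4) := by
    rw [uIcc_of_le h34]; exact fun h => absurd (h1.trans h.1) (by norm_num)
  rw [intervalIntegral.integral_congr (g := fun x => t ^ 12 * x ^ (-3 : ℝ)) fun x hx => ?_,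
    intervalIntegral.integral_const_mul, integral_rpow (Or.inr ⟨by norm_num, hzero⟩),
    ← rpow_natCast t 3, ← rpow_natCast t 4, ← rpow_mul (by positivity),
    ← rpow_mul (by positivity)]
  · norm_num
    field_simp
    ring
  · rw [uIcc_of_le h34] at hx
    have hx0 : 0 < x := one_pos.trans_le (h1.trans hx.1)
    simp only [sliceTop_of_ge (by positivity) hx0 hx.1, rpow_neg hx0.le, div_eq_mul_inv]
    norm_cast

lemma integral_sliceTop {t : ℝ} (ht : 1 ≤ t) :
    ∫ x in (1 : ℝ)..t ^ 4, sliceTop t x = 2 * (t ^ 6 - t ^ 4) := by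
  have h1 : 1 ≤ t ^ 3 := one_le_pow₀ ht
  rw [← intervalIntegral.integral_add_adjacent_intervals
    (intervalIntegrable_sliceTop t one_pos h1)
    (intervalIntegrable_sliceTop t (one_pos.trans_le h1) (pow_le_pow_right₀ ht (by norm_num))),
    integral_sliceTop_of_le_cube ht, integral_sliceTop_of_cube_le ht]
  ring

lemma volume_region {μ t : ℝ} (ht : 1 ≤ t) (hμ : μ ^ (-(4 : ℝ)) = t ^ 12) :
    volume (ads4Q12Region μ) = ENNReal.ofReal (2 * t ^ 6 - 3 * t ^ 4 + 1) := by
  have ht4 : 1 ≤ t ^ 4 := one_le_pow₀ ht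
  have hone_le : ∀ x ∈ Icc 1 (t ^ 4), 1 ≤ sliceTop t x := by
    intro x hx
    have hx3 : x ^ 3 ≤ t ^ 12 := by
      calc x ^ 3 ≤ (t ^ 4) ^ 3 := pow_le_pow_left₀ (by linarith [hx.1]) hx.2 3
        _ = t ^ 12 := by ring
    rw [le_sliceTop_iff (one_pos.trans_le hx.1) zero_le_one, mul_one, one_pow, mul_one]
    exact ⟨hx3, (le_self_pow₀ hx.1 three_ne_zero).trans hx3⟩
  have hint : IntegrableOn (fun x => sliceTop t x - 1) (Icc 1 (t ^ 4)) :=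
    (((continuousOn_sliceTop t).mono fun _ hx => one_pos.trans_le hx.1).sub
      continuousOn_const).integrableOn_compact isCompact_Icc
  rw [region_eq hμ, Measure.volume_eq_prod,
    volume_region_between_cc_eq_lintegral volume measurable_const (measurable_sliceTop t)
      measurableSet_Icc,
    ← ofReal_integral_eq_lintegral_ofReal hint ((ae_restrict_iff' measurableSet_Icc).2
      (Eventually.of_forall fun x hx => sub_nonneg.2 (hone_le x hx))),
    integral_Icc_eq_integral_Ioc, ← intervalIntegral.integral_of_le ht4,
    intervalIntegral.integral_sub (intervalIntegrable_sliceTop t one_pos ht4)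
      intervalIntegrable_const, integral_sliceTop ht, intervalIntegral.integral_const,
    smul_eq_mul, mul_one]
  congr 1
  ring

end Ads4Q12

/-- The continuum count `𝔑^{(Q=12)}_{AdS₄}(μ)` is asymptotic to `2 μ^{−2}`:
`lim_{μ→0⁺} μ² · area(S_μ) = 2`. -/
theorem ads4_Q12_count_asymptotics :
    Tendsto (fun μ : ℝ => μ ^ 2 * (volume (ads4Q12Region μ)).toReal)
      (nhdsWithin 0 (Set.Ioi 0)) (nhds 2) := by
  have hcbrt : Tendsto (fun μ : ℝ => μ ^ (1 / 3 : ℝ)) (nhdsWithin 0 (Ioi 0)) (nhds 0) := by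
    simpa using (continuousAt_rpow_const 0 (1 / 3) (Or.inr (by norm_num))).tendsto.mono_left
      nhdsWithin_le_nhds
  have hpoly : Tendsto (fun s : ℝ => 2 - 3 * s ^ 2 + s ^ 6) (nhds 0) (nhds 2) := by
    simpa using (show Continuous fun s : ℝ => 2 - 3 * s ^ 2 + s ^ 6 by fun_prop).tendsto 0
  refine (hpoly.comp hcbrt).congr' ?_
  filter_upwards [Ioo_mem_nhdsGT one_pos] with μ ⟨hμ0, hμ1⟩
  rw [Function.comp_apply]
  set s := μ ^ (1 / 3 : ℝ)
  have hs0 : 0 < s := rpow_pos_of_pos hμ0 _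
  have hs1 : s ≤ 1 := rpow_le_one hμ0.le hμ1.le (by norm_num)
  have hμs : μ = s ^ 3 := by
    rw [← rpow_natCast, ← rpow_mul hμ0.le]; norm_num
  have hμt : μ ^ (-(4 : ℝ)) = s⁻¹ ^ 12 := by
    rw [rpow_neg hμ0.le, hμs, ← rpow_natCast, ← rpow_mul hs0.le]; norm_num
  rw [Ads4Q12.volume_region (one_le_inv₀ hs0 |>.2 hs1) hμt, ENNReal.toReal_ofReal, hμs]
  · field_simp
  · nlinarith [mul_nonneg (sq_nonneg (s⁻¹ ^ 2 - 1)) (by positivity : (0 : ℝ) ≤ 2 * s⁻¹ ^ 2 + 1)]
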